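/- Let τ > 0, n, d, m ∈ ℕ with m dividing n, and consider the coordinate-wise median-of-means estimator μ̂ on datasets of n points in ℝ^d: for each coordinate j ∈ [d], clip every point's j-th coordinate to [−3τ, 3τ], partition the n clipped values into m consecutive batches of size n/m, compute each batch mean, and set μ̂_j to the median of the m batch means (with the median of an even number of values defined as the average of the two middle order statistics). Then for any two datasets X, X' differing in exactly one point and every coordinate j, |μ̂_j(X) − μ̂_j(X')| ≤ 6τm/n; consequently, the ℓ₁ sensitivity of μ̂ is at most 6τmd/n and the ℓ₂ sensitivity of μ̂ is at most 6τm√d/n. -/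

import Mathlib

open MeasureTheory ProbabilityTheory Real
open scoped ENNReal NNReal BigOperators

noncomputable section

/-- Clip a real number to the interval `[-3τ, 3τ]`. -/
def clip (τ x : ℝ) : ℝ := max (-(3 * τ)) (min (3 * τ) x)

/-- Median of `m` real values; when `m` is even, the average of the two middle
order statistics. -/
def medianOf {m : ℕ} (v : Fin m → ℝ) : ℝ :=
  let s := (List.ofFn v).mergeSort (fun a b => a ≤ b)
  if m % 2 = 1 then s.getD (m / 2) 0
  else (s.getD (m / 2 - 1) 0 + s.getD (m / 2) 0) / 2

/-- Mean of the `i`-th batch (of size `n / m`) of the clipped values. -/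
def batchMean (n m : ℕ) (τ : ℝ) (x : Fin n → ℝ) (i : Fin m) : ℝ :=
  (m : ℝ) / n * ∑ t ∈ Finset.univ.filter (fun t : Fin n => (t : ℕ) / (n / m) = (i : ℕ)),
    clip τ (x t)

/-- Coordinate-wise median-of-means estimator of clipped samples: for each coordinate `j`,
clip every sample's `j`-th coordinate to `[-3τ, 3τ]`, split into `m` consecutive batches,
compute each batch mean, and take the median of the batch means. -/
def momEstimator (d n m : ℕ) (τ : ℝ) (X : Fin n → EuclideanSpace ℝ (Fin d)) :
    EuclideanSpace ℝ (Fin d) :=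
  WithLp.toLp 2 (fun j => medianOf (fun i : Fin m => batchMean n m τ (fun t => X t j) i))

/-- Two datasets are neighboring if they differ in exactly one entry. -/
def Neighbor {n : ℕ} {E : Type*} (X X' : Fin n → E) : Prop :=
  ∃ i, ∀ j, j ≠ i → X j = X' j


lemma count_ge_of_sorted (s : List ℝ) (hs : s.Pairwise (· ≤ ·)) (k : ℕ) (hk : k < s.length) (x : ℝ)
    (h : s[k] ≤ x) : k + 1 ≤ s.countP (fun a => a ≤ x) := by
  calc k + 1 = (s.take (k+1)).length := by simp [List.length_take]; omega
  _ = (s.take (k+1)).countP (fun a => a ≤ x) := by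
      symm
      rw [List.countP_eq_length]
      intro a ha
      rw [List.mem_iff_getElem] at ha
      obtain ⟨i, hi, rfl⟩ := ha
      simp only [List.getElem_take, decide_eq_true_eq]
      have hik : i ≤ k := by simp [List.length_take] at hi; omega
      have : s[i] ≤ s[k] := hs.rel_get_of_le (a := ⟨i, by omega⟩) (b := ⟨k, hk⟩) hik
      linarith
  _ ≤ s.countP (fun a => a ≤ x) := by
      conv_rhs => rw [← List.take_append_drop (k+1) s]
      rw [List.countP_append]; omega

lemma le_of_count_ge (s : List ℝ) (hs : s.Pairwise (· ≤ ·)) (k : ℕ) (hk : k < s.length) (x : ℝ)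
    (h : k + 1 ≤ s.countP (fun a => a ≤ x)) : s[k] ≤ x := by
  by_contra hx
  push_neg at hx
  have hd : (s.drop k).countP (fun a => a ≤ x) = 0 := by
    rw [List.countP_eq_zero]
    intro a ha
    rw [List.mem_iff_getElem] at ha
    obtain ⟨i, hi, rfl⟩ := ha
    have hi' : k + i < s.length := by simp [List.length_drop] at hi; omega
    simp only [List.getElem_drop, decide_eq_true_eq]
    have : s[k] ≤ s[k+i] := hs.rel_get_of_le (a := ⟨k, hk⟩) (b := ⟨k+i, hi'⟩) (by simp)
    push_neg
    linarith
  have := List.countP_le_length (l := s.take k) (p := fun a => a ≤ x)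
  have hlt : s.countP (fun a => a ≤ x) ≤ k := by
    conv_lhs => rw [← List.take_append_drop k s]
    rw [List.countP_append, hd]
    simp [List.length_take] at this ⊢
    omega
  omega

noncomputable def sortOf {m : ℕ} (v : Fin m → ℝ) : List ℝ :=
  (List.ofFn v).mergeSort (fun a b => a ≤ b)

lemma sortOf_length {m : ℕ} (v : Fin m → ℝ) : (sortOf v).length = m := by
  simp [sortOf, List.length_mergeSort]

lemma sortOf_sorted {m : ℕ} (v : Fin m → ℝ) : (sortOf v).Pairwise (· ≤ ·) := by
  have := List.pairwise_mergeSort (le := fun a b : ℝ => decide (a ≤ b))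
    (fun a b c => by simp; exact le_trans)
    (fun a b => by simp; exact le_total a b) (List.ofFn v)
  simpa [sortOf, List.Pairwise] using this

lemma sortOf_countP {m : ℕ} (v : Fin m → ℝ) (p : ℝ → Bool) :
    (sortOf v).countP p = (List.finRange m).countP (fun i => p (v i)) := by
  rw [sortOf, (List.mergeSort_perm _ _).countP_eq, List.ofFn_eq_map, List.countP_map]
  rfl

lemma ordStat_le {m : ℕ} (v w : Fin m → ℝ) (δ : ℝ) (h : ∀ i, v i ≤ w i + δ)
    (k : ℕ) (hk : k < m) :
    (sortOf v)[k]'(by rw [sortOf_length]; exact hk) ≤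
      (sortOf w)[k]'(by rw [sortOf_length]; exact hk) + δ := by
  set x := (sortOf w)[k]'(by rw [sortOf_length]; exact hk) with hx
  apply le_of_count_ge _ (sortOf_sorted v) _ _ _
  have h1 : k + 1 ≤ (sortOf w).countP (fun a => a ≤ x) :=
    count_ge_of_sorted _ (sortOf_sorted w) k (by rw [sortOf_length]; exact hk) x le_rfl
  rw [sortOf_countP] at h1
  rw [sortOf_countP]
  refine h1.trans (List.countP_mono_left ?_)
  intro i _ hi
  simp only [decide_eq_true_eq] at hi ⊢
  linarith [h i]

lemma ordStat_abs {m : ℕ} (v w : Fin m → ℝ) (δ : ℝ) (h : ∀ i, |v i - w i| ≤ δ)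
    (k : ℕ) (hk : k < m) :
    |(sortOf v).getD k 0 - (sortOf w).getD k 0| ≤ δ := by
  rw [List.getD_eq_getElem _ _ (by rw [sortOf_length]; exact hk),
      List.getD_eq_getElem _ _ (by rw [sortOf_length]; exact hk)]
  rw [abs_sub_le_iff]
  constructor
  · have := ordStat_le v w δ (fun i => by have := abs_le.1 (h i); linarith [this.2]) k hk
    linarith
  · have := ordStat_le w v δ (fun i => by have := abs_le.1 (h i); linarith [this.1]) k hk
    linarith

lemma medianOf_lipschitz {m : ℕ} (hm : 0 < m) (v w : Fin m → ℝ) (δ : ℝ)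
    (h : ∀ i, |v i - w i| ≤ δ) : |medianOf v - medianOf w| ≤ δ := by
  unfold medianOf
  simp only
  by_cases hp : m % 2 = 1
  · simp only [hp, if_true]
    exact ordStat_abs v w δ h (m / 2) (by omega)
  · simp only [hp, if_false]
    have h1 := ordStat_abs v w δ h (m / 2 - 1) (by omega)
    have h2 := ordStat_abs v w δ h (m / 2) (by omega)
    simp only [sortOf] at h1 h2
    rw [abs_le] at h1 h2 ⊢
    constructor <;> [linarith [h1.1, h2.1]; linarith [h1.2, h2.2]]

lemma clip_abs_le {τ : ℝ} (hτ : 0 ≤ τ) (x : ℝ) : |clip τ x| ≤ 3 * τ := by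
  rw [abs_le, clip]
  constructor
  · exact le_max_left _ _
  · exact max_le (by linarith) (min_le_left _ _)

lemma clip_diff_le {τ : ℝ} (hτ : 0 ≤ τ) (a b : ℝ) : |clip τ a - clip τ b| ≤ 6 * τ := by
  have := clip_abs_le hτ a
  have := clip_abs_le hτ b
  calc |clip τ a - clip τ b| ≤ |clip τ a| + |clip τ b| := abs_sub _ _
  _ ≤ 6 * τ := by linarith

lemma batchMean_diff (n m : ℕ) (τ : ℝ) (hτ : 0 ≤ τ) (hn : 0 < n)
    (x x' : Fin n → ℝ) (i₀ : Fin n) (hxx : ∀ t, t ≠ i₀ → x t = x' t) (i : Fin m) :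
    |batchMean n m τ x i - batchMean n m τ x' i| ≤ 6 * τ * m / n := by
  have hnpos : (0:ℝ) < n := by exact_mod_cast hn
  have hmn : (0:ℝ) ≤ (m:ℝ)/n := by positivity
  unfold batchMean
  rw [← mul_sub, ← Finset.sum_sub_distrib]
  set S := Finset.univ.filter (fun t : Fin n => (t : ℕ) / (n / m) = (i : ℕ)) with hS
  have hz : ∀ t ∈ S, t ≠ i₀ → clip τ (x t) - clip τ (x' t) = 0 := by
    intro t _ ht; rw [hxx t ht]; ring
  have hsum : |∑ t ∈ S, (clip τ (x t) - clip τ (x' t))| ≤ 6 * τ := by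
    by_cases hmem : i₀ ∈ S
    · rw [Finset.sum_eq_single_of_mem i₀ hmem (fun t ht h => hz t ht h)]
      exact clip_diff_le hτ _ _
    · rw [Finset.sum_eq_zero (fun t ht => hz t ht (fun h => hmem (h ▸ ht)))]
      simpa using by positivity
  calc |(m:ℝ)/n * ∑ t ∈ S, (clip τ (x t) - clip τ (x' t))|
      = (m:ℝ)/n * |∑ t ∈ S, (clip τ (x t) - clip τ (x' t))| := by
        rw [abs_mul, abs_of_nonneg hmn]
  _ ≤ (m:ℝ)/n * (6 * τ) := by
        exact mul_le_mul_of_nonneg_left hsum hmn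
  _ = 6 * τ * m / n := by ring

/-- Sensitivity of the coordinate-wise median-of-means estimator of clipped samples:
on neighboring datasets each coordinate changes by at most `6τm/n`; consequently the
`ℓ₁` sensitivity is at most `6τmd/n` and the `ℓ₂` sensitivity is at most `6τm√d/n`. -/
theorem mom_estimator_sensitivity
    (d n m : ℕ) (τ : ℝ) (hτ : 0 < τ) (hn : 0 < n) (hm : 0 < m) (hmn : m ∣ n)
    (X X' : Fin n → EuclideanSpace ℝ (Fin d)) (hXX' : Neighbor X X') :
    (∀ j : Fin d,
      |momEstimator d n m τ X j - momEstimator d n m τ X' j| ≤ 6 * τ * m / n) ∧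
    (∑ j : Fin d, |momEstimator d n m τ X j - momEstimator d n m τ X' j| ≤
      6 * τ * m * d / n) ∧
    ‖momEstimator d n m τ X - momEstimator d n m τ X'‖ ≤
      6 * τ * m * Real.sqrt d / n := by
  obtain ⟨i₀, hi₀⟩ := hXX'
  have hB : (0:ℝ) ≤ 6 * τ * m / n := by positivity
  have h1 : ∀ j : Fin d,
      |momEstimator d n m τ X j - momEstimator d n m τ X' j| ≤ 6 * τ * m / n := by
    intro j
    unfold momEstimator
    apply medianOf_lipschitz hm _ _ _
    intro i
    exact batchMean_diff n m τ hτ.le hn _ _ i₀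
      (fun t ht => by rw [hi₀ t ht]) i
  refine ⟨h1, ?_, ?_⟩
  · calc ∑ j : Fin d, |momEstimator d n m τ X j - momEstimator d n m τ X' j|
        ≤ ∑ _j : Fin d, (6 * τ * m / n) := Finset.sum_le_sum (fun j _ => h1 j)
    _ = d * (6 * τ * m / n) := by simp [mul_comm]
    _ = 6 * τ * m * d / n := by ring
  · rw [EuclideanSpace.norm_eq]
    have hptwise : ∀ j : Fin d,
        ‖(momEstimator d n m τ X - momEstimator d n m τ X') j‖ ≤ 6 * τ * m / n := by
      intro j
      simpa [Real.norm_eq_abs] using h1 j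
    calc Real.sqrt (∑ j : Fin d, ‖(momEstimator d n m τ X - momEstimator d n m τ X') j‖ ^ 2)
        ≤ Real.sqrt (∑ _j : Fin d, (6 * τ * m / n) ^ 2) := by
          apply Real.sqrt_le_sqrt
          apply Finset.sum_le_sum
          intro j _
          exact pow_le_pow_left₀ (norm_nonneg _) (hptwise j) 2
    _ = Real.sqrt (d * (6 * τ * m / n) ^ 2) := by simp [mul_comm]
    _ = Real.sqrt d * (6 * τ * m / n) := by
          rw [Real.sqrt_mul (Nat.cast_nonneg d), Real.sqrt_sq hB]
    _ = 6 * τ * m * Real.sqrt d / n := by ring
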